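/- (Finite blocklength lower bound.) Let P be a probability distribution on a countable set S, let φ : S → 𝒰* be an encoder and ψ : 𝒰* → S a decoder, and set D := {x ∈ S : x = ψ(φ(x))}. Then for every real a > 0 and every real η ≥ 1, P{x : l(φ(x)) > η} ≥ P{x ∈ D : P({x}) ≤ a·K^{−η}·P(D)} − a·K·P(D). -/
import Mathlib


open Filter MeasureTheory

namespace NY

/-- A probability distribution on a set, given by its point mass function. -/
structure Dist (α : Type*) where
  p : α → ℝ
  nonneg : ∀ x, 0 ≤ p x
  hasSum : HasSum p 1

/-- The probability of a set under a distribution. -/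
noncomputable def Dist.pr {α : Type*} (P : Dist α) (A : Set α) : ℝ := ∑' x : A, P.p x.1

/-- 𝒰* : nonempty finite strings over the code alphabet 𝒰 = {1,…,K}. -/
abbrev Word (K : ℕ) := {u : List (Fin K) // u ≠ []}

/-- Length of a string, as a real number. -/
noncomputable def wlen {K : ℕ} (u : Word K) : ℝ := u.1.length

/-- Error probability of a variable-length code (φ, ψ). -/
noncomputable def errP {α : Type*} {K : ℕ} (P : Dist α) (φ : α → Word K) (ψ : Word K → α) : ℝ :=
  P.pr {x | ψ (φ x) ≠ x}

/-- Overflow probability of an encoder φ with threshold η. -/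
noncomputable def ovP {α : Type*} {K : ℕ} (P : Dist α) (φ : α → Word K) (η : ℝ) : ℝ :=
  P.pr {x | wlen (φ x) > η}

/-- A general source: for each blocklength n, a distribution on 𝒳^n. -/
abbrev Source (𝒳 : Type*) := (n : ℕ) → Dist (Fin n → 𝒳)

/-- The limit as ν ↓ 0 of a function g which is nonincreasing in ν
(the limit exists by monotonicity and equals the supremum over ν > 0). -/
noncomputable def limNu (g : ℝ → ℝ) : ℝ := sSup (g '' Set.Ioi (0 : ℝ))

variable {𝒳 : Type*}

/-- A rate R ≥ 0 is (ε,δ)-achievable. -/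
def FirstAch (K : ℕ) (X : Source 𝒳) (ε δ R : ℝ) : Prop :=
  0 ≤ R ∧ ∃ (φ : ∀ n, (Fin n → 𝒳) → Word K) (ψ : ∀ n, Word K → (Fin n → 𝒳)),
    limsup (fun n => errP (X n) (φ n) (ψ n)) atTop ≤ ε ∧
    limsup (fun n => ovP (X n) (φ n) ((n : ℝ) * R)) atTop ≤ δ

/-- The first-order (ε,δ)-optimum threshold R(ε,δ|X). -/
noncomputable def Ropt (K : ℕ) (X : Source 𝒳) (ε δ : ℝ) : ℝ :=
  sInf {R | FirstAch K X ε δ R}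

/-- L is (ε,δ,R)-achievable (second order). -/
def SecondAch (K : ℕ) (X : Source 𝒳) (ε δ R L : ℝ) : Prop :=
  ∃ (φ : ∀ n, (Fin n → 𝒳) → Word K) (ψ : ∀ n, Word K → (Fin n → 𝒳)),
    limsup (fun n => errP (X n) (φ n) (ψ n)) atTop ≤ ε ∧
    limsup (fun n => ovP (X n) (φ n) ((n : ℝ) * R + Real.sqrt (n : ℝ) * L)) atTop ≤ δ

/-- The second-order (ε,δ,R)-optimum threshold L(ε,δ,R|X). -/
noncomputable def Lopt (K : ℕ) (X : Source 𝒳) (ε δ R : ℝ) : ℝ :=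
  sInf {L | SecondAch K X ε δ R L}

/-- A rate R ≥ 0 is optimistically (ε,δ)-achievable. -/
def OptFirstAch (K : ℕ) (X : Source 𝒳) (ε δ R : ℝ) : Prop :=
  0 ≤ R ∧ ∃ (φ : ∀ n, (Fin n → 𝒳) → Word K) (ψ : ∀ n, Word K → (Fin n → 𝒳)),
    ∀ γ > (0 : ℝ), ∃ ns : ℕ → ℕ, StrictMono ns ∧ ∀ i,
      errP (X (ns i)) (φ (ns i)) (ψ (ns i)) ≤ ε + γ ∧
      ovP (X (ns i)) (φ (ns i)) ((ns i : ℝ) * R) ≤ δ + γ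

/-- The optimistic first-order (ε,δ)-optimum threshold R*(ε,δ|X). -/
noncomputable def RoptStar (K : ℕ) (X : Source 𝒳) (ε δ : ℝ) : ℝ :=
  sInf {R | OptFirstAch K X ε δ R}

/-- L is optimistically (ε,δ,R)-achievable. -/
def OptSecondAch (K : ℕ) (X : Source 𝒳) (ε δ R L : ℝ) : Prop :=
  ∃ (φ : ∀ n, (Fin n → 𝒳) → Word K) (ψ : ∀ n, Word K → (Fin n → 𝒳)),
    ∀ γ > (0 : ℝ), ∃ ns : ℕ → ℕ, StrictMono ns ∧ ∀ i,
      errP (X (ns i)) (φ (ns i)) (ψ (ns i)) ≤ ε + γ ∧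
      ovP (X (ns i)) (φ (ns i)) ((ns i : ℝ) * R + Real.sqrt (ns i : ℝ) * L) ≤ δ + γ

/-- The optimistic second-order (ε,δ,R)-optimum threshold L*(ε,δ,R|X). -/
noncomputable def LoptStar (K : ℕ) (X : Source 𝒳) (ε δ R : ℝ) : ℝ :=
  sInf {L | OptSecondAch K X ε δ R L}

/-- A rate R ≥ 0 is type I (ε,δ)-achievable. -/
def TypeIAch (K : ℕ) (X : Source 𝒳) (ε δ R : ℝ) : Prop :=
  0 ≤ R ∧ ∃ (φ : ∀ n, (Fin n → 𝒳) → Word K) (ψ : ∀ n, Word K → (Fin n → 𝒳)),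
    limsup (fun n => errP (X n) (φ n) (ψ n)) atTop ≤ ε ∧
    liminf (fun n => ovP (X n) (φ n) ((n : ℝ) * R)) atTop ≤ δ

/-- R†(ε,δ|X). -/
noncomputable def Rdagger (K : ℕ) (X : Source 𝒳) (ε δ : ℝ) : ℝ :=
  sInf {R | TypeIAch K X ε δ R}

/-- A rate R ≥ 0 is type II (ε,δ)-achievable. -/
def TypeIIAch (K : ℕ) (X : Source 𝒳) (ε δ R : ℝ) : Prop :=
  0 ≤ R ∧ ∃ (φ : ∀ n, (Fin n → 𝒳) → Word K) (ψ : ∀ n, Word K → (Fin n → 𝒳)),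
    liminf (fun n => errP (X n) (φ n) (ψ n)) atTop ≤ ε ∧
    limsup (fun n => ovP (X n) (φ n) ((n : ℝ) * R)) atTop ≤ δ

/-- R‡(ε,δ|X). -/
noncomputable def Rddagger (K : ℕ) (X : Source 𝒳) (ε δ : ℝ) : ℝ :=
  sInf {R | TypeIIAch K X ε δ R}

/-- H̄_γ(X) := inf{ R : limsup_n Pr{ (1/n) log(1/P_{X^n}(X^n)) > R } ≤ γ }. -/
noncomputable def Hbar (K : ℕ) (X : Source 𝒳) (γ : ℝ) : ℝ :=
  sInf {R | limsup (fun n =>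
    (X n).pr {x | Real.logb (K : ℝ) (1 / (X n).p x) / (n : ℝ) > R}) atTop ≤ γ}

/-- H̄*_γ(X) (optimistic version, with liminf). -/
noncomputable def HbarStar (K : ℕ) (X : Source 𝒳) (γ : ℝ) : ℝ :=
  sInf {R | liminf (fun n =>
    (X n).pr {x | Real.logb (K : ℝ) (1 / (X n).p x) / (n : ℝ) > R}) atTop ≤ γ}

/-- H̄_γ(R|X) := inf{ L : limsup_n Pr{ (1/n) log(1/P_{X^n}(X^n)) > R + L/√n } ≤ γ }. -/
noncomputable def Hbar2 (K : ℕ) (X : Source 𝒳) (γ R : ℝ) : ℝ :=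
  sInf {L | limsup (fun n =>
    (X n).pr {x | Real.logb (K : ℝ) (1 / (X n).p x) / (n : ℝ)
      > R + L / Real.sqrt (n : ℝ)}) atTop ≤ γ}

/-- H̄*_γ(R|X) (optimistic version, with liminf). -/
noncomputable def Hbar2Star (K : ℕ) (X : Source 𝒳) (γ R : ℝ) : ℝ :=
  sInf {L | liminf (fun n =>
    (X n).pr {x | Real.logb (K : ℝ) (1 / (X n).p x) / (n : ℝ)
      > R + L / Real.sqrt (n : ℝ)}) atTop ≤ γ}

/-- F(ε,R) := limsup_n inf_{A : Pr(A) ≥ 1−ε} Pr{ −(1/n) log P_{X^n}(X^n) ≥ R, X^n ∈ A }. -/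
noncomputable def Fspec (K : ℕ) (X : Source 𝒳) (ε R : ℝ) : ℝ :=
  limsup (fun n =>
    sInf ((fun A : Set (Fin n → 𝒳) =>
        (X n).pr (A ∩ {x | -Real.logb (K : ℝ) ((X n).p x) / (n : ℝ) ≥ R})) ''
      {A | (X n).pr A ≥ 1 - ε})) atTop

/-- H̃_{ε,δ}(X) := inf{ R : F(ε,R) ≤ δ }. -/
noncomputable def Htilde (K : ℕ) (X : Source 𝒳) (ε δ : ℝ) : ℝ :=
  sInf {R | Fspec K X ε R ≤ δ}

/-- G_{ε,δ}(X). -/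
noncomputable def Gfirst (K : ℕ) (X : Source 𝒳) (ε δ : ℝ) : ℝ :=
  sInf {R | limNu (fun ν => limsup (fun n =>
    sInf ((fun A : Set (Fin n → 𝒳) =>
        (X n).pr (A ∩ {x | -Real.logb (K : ℝ) ((X n).p x / (X n).pr A) / (n : ℝ) ≥ R})) ''
      {A | (X n).pr A ≥ 1 - ε - ν})) atTop) ≤ δ}

/-- G*_{ε,δ}(X) (optimistic version, with liminf). -/
noncomputable def GfirstStar (K : ℕ) (X : Source 𝒳) (ε δ : ℝ) : ℝ :=
  sInf {R | limNu (fun ν => liminf (fun n =>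
    sInf ((fun A : Set (Fin n → 𝒳) =>
        (X n).pr (A ∩ {x | -Real.logb (K : ℝ) ((X n).p x / (X n).pr A) / (n : ℝ) ≥ R})) ''
      {A | (X n).pr A ≥ 1 - ε - ν})) atTop) ≤ δ}

/-- G_{ε,δ}(R|X). -/
noncomputable def Gsecond (K : ℕ) (X : Source 𝒳) (ε δ R : ℝ) : ℝ :=
  sInf {L | limNu (fun ν => limsup (fun n =>
    sInf ((fun A : Set (Fin n → 𝒳) =>
        (X n).pr (A ∩ {x | -Real.logb (K : ℝ) ((X n).p x / (X n).pr A) / (n : ℝ)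
          ≥ R + L / Real.sqrt (n : ℝ)})) ''
      {A | (X n).pr A ≥ 1 - ε - ν})) atTop) ≤ δ}

/-- G*_{ε,δ}(R|X) (optimistic version, with liminf). -/
noncomputable def GsecondStar (K : ℕ) (X : Source 𝒳) (ε δ R : ℝ) : ℝ :=
  sInf {L | limNu (fun ν => liminf (fun n =>
    sInf ((fun A : Set (Fin n → 𝒳) =>
        (X n).pr (A ∩ {x | -Real.logb (K : ℝ) ((X n).p x / (X n).pr A) / (n : ℝ)
          ≥ R + L / Real.sqrt (n : ℝ)})) ''
      {A | (X n).pr A ≥ 1 - ε - ν})) atTop) ≤ δ}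

/-- A rate R is optimistically ε-achievable by fixed-length codes. -/
def FixAchR (K : ℕ) (X : Source 𝒳) (ε R : ℝ) : Prop :=
  ∃ (M : ℕ → ℕ) (φ : ∀ n, (Fin n → 𝒳) → Fin (M n)) (ψ : ∀ n, Fin (M n) → (Fin n → 𝒳)),
    ∀ γ > (0 : ℝ), ∃ ns : ℕ → ℕ, StrictMono ns ∧ ∀ i,
      (X (ns i)).pr {x | ψ (ns i) (φ (ns i) x) ≠ x} ≤ ε + γ ∧
      Real.logb (K : ℝ) (M (ns i) : ℝ) / (ns i : ℝ) ≤ R + γ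

/-- R^f(ε|X). -/
noncomputable def Rfix (K : ℕ) (X : Source 𝒳) (ε : ℝ) : ℝ :=
  sInf {R | FixAchR K X ε R}

/-- A real L is optimistically (ε,R)-achievable by fixed-length codes. -/
def FixAchL (K : ℕ) (X : Source 𝒳) (ε R L : ℝ) : Prop :=
  ∃ (M : ℕ → ℕ) (φ : ∀ n, (Fin n → 𝒳) → Fin (M n)) (ψ : ∀ n, Fin (M n) → (Fin n → 𝒳)),
    ∀ γ > (0 : ℝ), ∃ ns : ℕ → ℕ, StrictMono ns ∧ ∀ i,
      (X (ns i)).pr {x | ψ (ns i) (φ (ns i) x) ≠ x} ≤ ε + γ ∧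
      Real.logb (K : ℝ) ((M (ns i) : ℝ) / (K : ℝ) ^ ((ns i : ℝ) * R)) / Real.sqrt (ns i : ℝ)
        ≤ L + γ

/-- L^f(ε,R|X). -/
noncomputable def Lfix (K : ℕ) (X : Source 𝒳) (ε R : ℝ) : ℝ :=
  sInf {L | FixAchL K X ε R L}

section PrLemmas
variable {α : Type*} (P : Dist α)

lemma Dist.summable : Summable P.p := P.hasSum.summable

lemma Dist.pr_eq (A : Set α) : P.pr A = ∑' x, A.indicator P.p x := tsum_subtype A P.p

lemma Dist.pr_nonneg (A : Set α) : 0 ≤ P.pr A := tsum_nonneg fun x => P.nonneg x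

lemma Dist.pr_mono {A B : Set α} (h : A ⊆ B) : P.pr A ≤ P.pr B := by
  rw [Dist.pr_eq, Dist.pr_eq]
  exact Summable.tsum_le_tsum
    (fun x => Set.indicator_le_indicator_of_subset h (fun y => P.nonneg y) x)
    (P.summable.indicator A) (P.summable.indicator B)

lemma Dist.pr_union_le (A B : Set α) : P.pr (A ∪ B) ≤ P.pr A + P.pr B := by
  classical
  rw [Dist.pr_eq, Dist.pr_eq, Dist.pr_eq,
    ← Summable.tsum_add (P.summable.indicator A) (P.summable.indicator B)]
  refine Summable.tsum_le_tsum (fun x => ?_) (P.summable.indicator _)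
    ((P.summable.indicator A).add (P.summable.indicator B))
  by_cases hA : x ∈ A <;> by_cases hB : x ∈ B <;>
    simp [Set.indicator_apply, hA, hB, P.nonneg x]

lemma Dist.pr_biUnion_le {ι : Type*} (s : Finset ι) (A : ι → Set α) :
    P.pr (⋃ i ∈ s, A i) ≤ ∑ i ∈ s, P.pr (A i) := by
  classical
  induction s using Finset.induction with
  | empty => simp [Dist.pr_eq]
  | @insert a s ha ih =>
      rw [Finset.sum_insert ha, Finset.set_biUnion_insert]
      exact le_trans (P.pr_union_le _ _) (by linarith [ih])

lemma Dist.pr_finite_le {F : Set α} (hF : F.Finite) {c : ℝ} (hc : 0 ≤ c)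
    (h : ∀ x ∈ F, P.p x ≤ c) : P.pr F ≤ F.ncard * c := by
  classical
  rw [Dist.pr_eq]
  rw [tsum_eq_sum (s := hF.toFinset)
    (fun x hx => Set.indicator_of_notMem (fun hxF => hx (hF.mem_toFinset.mpr hxF)) _)]
  calc ∑ x ∈ hF.toFinset, F.indicator P.p x ≤ ∑ x ∈ hF.toFinset, c := by
        refine Finset.sum_le_sum fun x hx => ?_
        rw [Set.indicator_of_mem (hF.mem_toFinset.mp hx)]
        exact h x (hF.mem_toFinset.mp hx)
    _ = hF.toFinset.card * c := by rw [Finset.sum_const, nsmul_eq_mul]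
    _ = F.ncard * c := by rw [Set.ncard_eq_toFinset_card F hF]

lemma ncard_len (K i : ℕ) : ({l : List (Fin K) | l.length = i}).ncard = K ^ i := by
  have e : {l : List (Fin K) | l.length = i} ≃ List.Vector (Fin K) i := Equiv.refl _
  rw [← Nat.card_coe_set_eq, Nat.card_congr e, Nat.card_eq_fintype_card,
    card_vector, Fintype.card_fin]

lemma geo_le {K : ℕ} (hK : 2 ≤ K) (m : ℕ) :
    ∑ i ∈ Finset.range (m + 1), K ^ i ≤ K ^ (m + 1) := by
  induction m with
  | zero => simpa using hK.trans' (by norm_num)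
  | succ m ih =>
      rw [Finset.sum_range_succ]
      have h2 : 2 * K ^ (m + 1) ≤ K * K ^ (m + 1) :=
        Nat.mul_le_mul_right _ hK
      calc ∑ i ∈ Finset.range (m + 1), K ^ i + K ^ (m + 1)
          ≤ K ^ (m + 1) + K ^ (m + 1) := by omega
        _ = 2 * K ^ (m + 1) := by ring
        _ ≤ K * K ^ (m + 1) := h2
        _ = K ^ (m + 2) := by ring

end PrLemmas

/-- finite blocklength lower bound. -/

theorem statement2 {S : Type*} [Countable S] (K : ℕ) (hK : 2 ≤ K)
    (P : Dist S) (φ : S → Word K) (ψ : Word K → S) (a η : ℝ) (ha : 0 < a) (hη : 1 ≤ η) :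
    P.pr {x | wlen (φ x) > η} ≥
      P.pr ({x | x = ψ (φ x)} ∩
          {x | P.p x ≤ a * (K : ℝ) ^ (-η) * P.pr {y | y = ψ (φ y)}})
        - a * K * P.pr {y | y = ψ (φ y)} := by
  classical
  have hη0 : (0:ℝ) ≤ η := le_trans zero_le_one hη
  set D : Set S := {y | y = ψ (φ y)} with hD
  set PD : ℝ := P.pr D with hPDdef
  have hPD : 0 ≤ PD := P.pr_nonneg D
  have hK1 : (1:ℝ) < (K:ℝ) := by exact_mod_cast lt_of_lt_of_le one_lt_two hK
  have hKpos : (0:ℝ) < (K:ℝ) := lt_trans zero_lt_one hK1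
  set c : ℝ := a * (K : ℝ) ^ (-η) * PD with hcdef
  have hc0 : 0 ≤ c := by
    have : (0:ℝ) < (K:ℝ) ^ (-η) := Real.rpow_pos_of_pos hKpos _
    exact mul_nonneg (mul_nonneg ha.le this.le) hPD
  set T : Set S := D ∩ {x | P.p x ≤ c} with hT
  set G : Set S := {x | wlen (φ x) > η} with hG
  set m : ℕ := ⌊η⌋₊ with hm
  set A : ℕ → Set S := fun i => {x | x ∈ T ∧ (φ x).1.length = i} with hA
  have hsub : T \ G ⊆ ⋃ i ∈ Finset.range (m + 1), A i := by
    intro x hx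
    have hxG : ¬ (wlen (φ x) > η) := hx.2
    have hlen : ((φ x).1.length : ℝ) ≤ η := not_lt.mp hxG
    have hlm : (φ x).1.length ≤ m := Nat.le_floor hlen
    simp only [Set.mem_iUnion, Finset.mem_range]
    exact ⟨(φ x).1.length, Nat.lt_succ_of_le hlm, hx.1, rfl⟩
  have hAi : ∀ i, P.pr (A i) ≤ (K:ℝ) ^ i * c := by
    intro i
    have hfin : ({l : List (Fin K) | l.length = i}).Finite := List.finite_length_eq _ i
    have hmaps : ∀ x ∈ A i, (φ x).1 ∈ {l : List (Fin K) | l.length = i} := fun x hx => hx.2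
    have hinj : Set.InjOn (fun x => (φ x).1) (A i) := by
      intro x hx y hy hxy
      have hφ : φ x = φ y := Subtype.ext hxy
      have hx' : x = ψ (φ x) := hx.1.1
      have hy' : y = ψ (φ y) := hy.1.1
      rw [hx', hy', hφ]
    have hAfin : (A i).Finite :=
      Set.Finite.of_finite_image (hfin.subset (Set.image_subset_iff.mpr hmaps)) hinj
    have hcard : (A i).ncard ≤ K ^ i := by
      have := Set.ncard_le_ncard_of_injOn _ hmaps hinj hfin
      rwa [ncard_len] at this
    have hle : ∀ x ∈ A i, P.p x ≤ c := fun x hx => hx.1.2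
    calc P.pr (A i) ≤ (A i).ncard * c := P.pr_finite_le hAfin hc0 hle
      _ ≤ (K:ℝ) ^ i * c := by
          apply mul_le_mul_of_nonneg_right _ hc0
          exact_mod_cast hcard
  have h1 : P.pr (T \ G) ≤ ∑ i ∈ Finset.range (m + 1), (K:ℝ) ^ i * c :=
    le_trans (le_trans (P.pr_mono hsub) (P.pr_biUnion_le _ _))
      (Finset.sum_le_sum fun i _ => hAi i)
  have h2 : ∑ i ∈ Finset.range (m + 1), (K:ℝ) ^ i * c ≤ (K:ℝ) ^ (m + 1) * c := by
    rw [← Finset.sum_mul]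
    apply mul_le_mul_of_nonneg_right _ hc0
    exact_mod_cast geo_le hK m
  have h3 : (K:ℝ) ^ (m + 1) * c ≤ a * K * PD := by
    rw [hcdef]
    have hfl : (m:ℝ) ≤ η := Nat.floor_le hη0
    have hexp : ((m + 1 : ℕ) : ℝ) + (-η) ≤ 1 := by push_cast; linarith
    have e1 : (K:ℝ) ^ (m + 1) = (K:ℝ) ^ (((m + 1 : ℕ) : ℝ)) := (Real.rpow_natCast _ _).symm
    calc (K:ℝ) ^ (m + 1) * (a * (K:ℝ) ^ (-η) * PD)
        = a * ((K:ℝ) ^ (((m + 1 : ℕ) : ℝ)) * (K:ℝ) ^ (-η)) * PD := by rw [e1]; ring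
      _ = a * (K:ℝ) ^ (((m + 1 : ℕ) : ℝ) + (-η)) * PD := by
          rw [← Real.rpow_add hKpos]
      _ ≤ a * (K:ℝ) ^ (1:ℝ) * PD := by
          apply mul_le_mul_of_nonneg_right _ hPD
          apply mul_le_mul_of_nonneg_left _ ha.le
          exact Real.rpow_le_rpow_of_exponent_le hK1.le hexp
      _ = a * K * PD := by rw [Real.rpow_one]
  have hTsplit : P.pr T ≤ P.pr G + P.pr (T \ G) := by
    have hss : T ⊆ G ∪ (T \ G) := fun x hx => (em (x ∈ G)).imp id fun h => ⟨hx, h⟩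
    exact le_trans (P.pr_mono hss) (P.pr_union_le _ _)
  have := le_trans h1 (le_trans h2 h3)
  linarith
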